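/- For basic formulas (no N_i operators) in ONL_n^- of maximal a-depth k and b-depth j, truth at a world w of the K45_n canonical model coincides with truth at the corresponding (k,j)-model: (M^c, w) ⊨ α iff (e_a^{[w],k}, e_b^{[w],j}, [w]) ⊨ α, where the (k,j)-correspondence model is built from the canonical accessibility relations. -/

import Mathlib

abbrev Atom := ℕ
abbrev World := Set Atom

/-- `KStr k` : the type of `k`-structures. A 0-structure is the trivial
empty object `PUnit.unit` (playing the role of `∅`); a `(k+1)`-structure is a
set of pairs of a world and a `k`-structure. Thus a 1-structure is a subset of
`W × {∅}`. -/
def KStr : ℕ → Type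
  | 0 => PUnit
  | (k+1) => Set (World × KStr k)


def toSet {k : ℕ} (e : KStr (k+1)) : Set (World × KStr k) := e

instance {k : ℕ} : Membership (World × KStr k) (KStr (k+1)) :=
  inferInstanceAs (Membership _ (Set (World × KStr k)))
instance {k : ℕ} : EmptyCollection (KStr (k+1)) :=
  inferInstanceAs (EmptyCollection (Set (World × KStr k)))
instance {k : ℕ} : Union (KStr (k+1)) :=
  inferInstanceAs (Union (Set (World × KStr k)))
instance {k : ℕ} : Compl (KStr (k+1)) :=
  inferInstanceAs (Compl (Set (World × KStr k)))

def unit0 : KStr 0 := PUnit.unit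

/-- Formulas of the propositional multi-agent only-knowing language ONL_n
with modal operators L_a, N_a, L_b, N_b. -/
inductive Formula : Type
  | atom : Atom → Formula
  | fls  : Formula
  | neg  : Formula → Formula
  | or   : Formula → Formula → Formula
  | La   : Formula → Formula
  | Na   : Formula → Formula
  | Lb   : Formula → Formula
  | Nb   : Formula → Formula

def Formula.and (α β : Formula) : Formula := .neg (.or (.neg α) (.neg β))
def Formula.imp (α β : Formula) : Formula := .or (.neg α) β
/-- O_a α := L_a α ∧ N_a ¬α -/
def Formula.Oa (α : Formula) : Formula := (Formula.La α).and (Formula.Na (.neg α))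
/-- O_b α := L_b α ∧ N_b ¬α -/
def Formula.Ob (α : Formula) : Formula := (Formula.Lb α).and (Formula.Nb (.neg α))

/-- Satisfaction at a (k,j)-model `(ea, eb, w)`. -/
def sat : (k : ℕ) → (j : ℕ) → KStr k → KStr j → World → Formula → Prop
  | _, _, _, _, w, .atom p => p ∈ w
  | _, _, _, _, _, .fls => False
  | k, j, ea, eb, w, .neg α => ¬ sat k j ea eb w α
  | k, j, ea, eb, w, .or α β => sat k j ea eb w α ∨ sat k j ea eb w β
  | 0, _, _, _, _, .La _ => True
  | (k+1), _, ea, _, _, .La α => ∀ p ∈ ea, sat (k+1) k ea p.2 p.1 α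
  | 0, _, _, _, _, .Na _ => True
  | (k+1), _, ea, _, _, .Na α => ∀ p : World × KStr k, p ∉ ea → sat (k+1) k ea p.2 p.1 α
  | _, 0, _, _, _, .Lb _ => True
  | k, (j+1), _, eb, _, .Lb α => ∀ p ∈ eb, sat j (j+1) p.2 eb p.1 α
  | _, 0, _, _, _, .Nb _ => True
  | k, (j+1), _, eb, _, .Nb α => ∀ p : World × KStr j, p ∉ eb → sat j (j+1) p.2 eb p.1 α

mutual
/-- a-depth of a formula -/
def depthA : Formula → ℕ
  | .atom _ => 1
  | .fls => 1
  | .neg α => depthA α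
  | .or α β => max (depthA α) (depthA β)
  | .La α => depthA α
  | .Na α => depthA α
  | .Lb α => depthB α + 1
  | .Nb α => depthB α + 1
/-- b-depth of a formula -/
def depthB : Formula → ℕ
  | .atom _ => 1
  | .fls => 1
  | .neg α => depthB α
  | .or α β => max (depthB α) (depthB β)
  | .Lb α => depthB α
  | .Nb α => depthB α
  | .La α => depthA α + 1
  | .Na α => depthA α + 1
end

/-- the restriction `e↓ₖ` of a structure -/
def restrict : (k : ℕ) → {m : ℕ} → KStr m → KStr k
  | 0, _, _ => unit0
  | (k+1), 0, _ => (∅ : Set (World × KStr k))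
  | (k+1), (_+1), e => (fun p => (p.1, restrict k p.2)) '' (toSet e)

/-- validity: truth at all (k,j)-models of appropriate depth -/
def valid (φ : Formula) : Prop :=
  ∀ (k j : ℕ), depthA φ ≤ k → depthB φ ≤ j →
    ∀ (ea : KStr k) (eb : KStr j) (w : World), sat k j ea eb w φ

def satisfiable (φ : Formula) : Prop :=
  ∃ (k j : ℕ) (ea : KStr k) (eb : KStr j) (w : World),
    depthA φ ≤ k ∧ depthB φ ≤ j ∧ sat k j ea eb w φ

/-- objective (non-modal) formulas -/
def objective : Formula → Prop
  | .atom _ => True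
  | .fls => True
  | .neg α => objective α
  | .or α β => objective α ∧ objective β
  | .La _ => False
  | .Na _ => False
  | .Lb _ => False
  | .Nb _ => False

/-- a-objective: all outermost modal operators are of agent b -/
def aObjective : Formula → Prop
  | .atom _ => True
  | .fls => True
  | .neg α => aObjective α
  | .or α β => aObjective α ∧ aObjective β
  | .La _ => False
  | .Na _ => False
  | .Lb _ => True
  | .Nb _ => True

/-- b-objective: all outermost modal operators are of agent a -/
def bObjective : Formula → Prop
  | .atom _ => True
  | .fls => True
  | .neg α => bObjective α
  | .or α β => bObjective α ∧ bObjective β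
  | .La _ => True
  | .Na _ => True
  | .Lb _ => False
  | .Nb _ => False

/-- basic formulas: no N_a, N_b -/
def basic : Formula → Prop
  | .atom _ => True
  | .fls => True
  | .neg α => basic α
  | .or α β => basic α ∧ basic β
  | .La α => basic α
  | .Lb α => basic α
  | .Na _ => False
  | .Nb _ => False

/-- set of a-objective formulas of b-depth ≤ d true at `(∅, e, w)` -/
def aTheory (d : ℕ) (e : KStr d) (w : World) : Set Formula :=
  {φ | aObjective φ ∧ depthB φ ≤ d ∧ sat 0 d unit0 e w φ}

def bTheory (d : ℕ) (e : KStr d) (w : World) : Set Formula :=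
  {φ | bObjective φ ∧ depthA φ ≤ d ∧ sat d 0 e unit0 w φ}

/-- Obj⁺_a(e_a) -/
def ObjA (d : ℕ) (ea : KStr (d+1)) : Set (Set Formula) :=
  {T | ∃ p : World × KStr d, p ∈ ea ∧ T = aTheory d p.2 p.1}

def ObjB (d : ℕ) (eb : KStr (d+1)) : Set (Set Formula) :=
  {T | ∃ p : World × KStr d, p ∈ eb ∧ T = bTheory d p.2 p.1}

/-- maximally satisfiable set of a-objective formulas of b-depth ≤ d -/
def maxSatA (d : ℕ) (S : Set Formula) : Prop :=
  (∀ φ ∈ S, aObjective φ ∧ depthB φ ≤ d) ∧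
  (∃ (e : KStr d) (w : World), ∀ φ ∈ S, sat 0 d unit0 e w φ) ∧
  (∀ ψ, aObjective ψ → depthB ψ ≤ d → ψ ∉ S →
    ¬ ∃ (e : KStr d) (w : World), ∀ φ ∈ insert ψ S, sat 0 d unit0 e w φ)

def maxSatB (d : ℕ) (S : Set Formula) : Prop :=
  (∀ φ ∈ S, bObjective φ ∧ depthA φ ≤ d) ∧
  (∃ (e : KStr d) (w : World), ∀ φ ∈ S, sat d 0 e unit0 w φ) ∧
  (∀ ψ, bObjective ψ → depthA ψ ≤ d → ψ ∉ S →
    ¬ ∃ (e : KStr d) (w : World), ∀ φ ∈ insert ψ S, sat d 0 e unit0 w φ)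

/-- `onlAux bA bB φ`: φ is admissible where `bA` records that N_a is banned
(we are in the scope of a b-modality) and `bB` that N_b is banned. -/
def onlAux : Bool → Bool → Formula → Prop
  | _, _, .atom _ => True
  | _, _, .fls => True
  | bA, bB, .neg α => onlAux bA bB α
  | bA, bB, .or α β => onlAux bA bB α ∧ onlAux bA bB β
  | bA, _, .La α => onlAux bA true α
  | bA, _, .Na α => bA = false ∧ onlAux bA true α
  | _, bB, .Lb α => onlAux true bB α
  | _, bB, .Nb α => bB = false ∧ onlAux true bB α

/-- ONL_n^- : no N_j in the scope of an L_i or N_i with i ≠ j -/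
def ONLminus (φ : Formula) : Prop := onlAux false false φ

inductive BoolComb (S : Set Formula) : Formula → Prop
  | base {φ} : φ ∈ S → BoolComb S φ
  | neg {φ} : BoolComb S φ → BoolComb S (.neg φ)
  | or {φ ψ} : BoolComb S φ → BoolComb S ψ → BoolComb S (.or φ ψ)

def stepL (S : Set Formula) : Set Formula :=
  {φ | BoolComb (S ∪ {ψ | ∃ α ∈ S, ψ = .La α ∨ ψ = .Na α ∨ ψ = .Lb α ∨ ψ = .Nb α}) φ}

/-- the hierarchy ONL_n^t (t ≥ 1), with ONL_n^1 = ONL_n^- -/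
def ONLt (t : ℕ) : Set Formula := stepL^[t-1] {φ | ONLminus φ}

def conjList : List Formula → Formula
  | [] => .neg .fls
  | (φ :: l) => φ.and (conjList l)

/-- instance of a propositional tautology -/
def Taut (φ : Formula) : Prop :=
  ∀ v : Formula → Bool, (∀ α, v (.neg α) = !v α) →
    (∀ α β, v (.or α β) = (v α || v β)) → v .fls = false → v φ = true

/-- K45_n provability (two agents) -/
inductive K45 : Formula → Prop
  | taut {φ} : Taut φ → K45 φ
  | kA (α β : Formula) : K45 ((Formula.La (α.imp β)).imp ((Formula.La α).imp (Formula.La β)))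
  | kB (α β : Formula) : K45 ((Formula.Lb (α.imp β)).imp ((Formula.Lb α).imp (Formula.Lb β)))
  | fourA (α : Formula) : K45 ((Formula.La α).imp (Formula.La (Formula.La α)))
  | fourB (α : Formula) : K45 ((Formula.Lb α).imp (Formula.Lb (Formula.Lb α)))
  | fiveA (α : Formula) : K45 ((Formula.neg (Formula.La α)).imp (Formula.La (Formula.neg (Formula.La α))))
  | fiveB (α : Formula) : K45 ((Formula.neg (Formula.Lb α)).imp (Formula.Lb (Formula.neg (Formula.Lb α))))
  | mp {α β} : K45 (α.imp β) → K45 α → K45 β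
  | necA {α} : K45 α → K45 (Formula.La α)
  | necB {α} : K45 α → K45 (Formula.Lb α)

def ConsSet (Γ : Set Formula) : Prop :=
  ∀ l : List Formula, (∀ φ ∈ l, φ ∈ Γ) → ¬ K45 (Formula.neg (conjList l))

/-- basic maximally K45_n-consistent set -/
def MCS (Γ : Set Formula) : Prop :=
  (∀ φ ∈ Γ, basic φ) ∧ ConsSet Γ ∧ ∀ φ, basic φ → (φ ∈ Γ ∨ Formula.neg φ ∈ Γ)

/-- worlds of the K45_n canonical model -/
def CW := {Γ : Set Formula // MCS Γ}

def RA (Γ Δ : CW) : Prop := ∀ α, Formula.La α ∈ Γ.val → α ∈ Δ.val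
def RB (Γ Δ : CW) : Prop := ∀ α, Formula.Lb α ∈ Γ.val → α ∈ Δ.val

/-- truth of basic formulas at a world of the canonical model -/
def csat (Γ : CW) : Formula → Prop
  | .atom p => Formula.atom p ∈ Γ.val
  | .fls => False
  | .neg α => ¬ csat Γ α
  | .or α β => csat Γ α ∨ csat Γ β
  | .La α => ∀ Δ : CW, RA Γ Δ → csat Δ α
  | .Lb α => ∀ Δ : CW, RB Γ Δ → csat Δ α
  | .Na _ => True
  | .Nb _ => True

/-- the propositional valuation [w] of a canonical world -/
def wval (Γ : CW) : World := {p | Formula.atom p ∈ Γ.val}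

/-- the (k,j)-correspondence structures; `corr true` is agent a's structure,
`corr false` agent b's -/
def corr : Bool → (k : ℕ) → CW → KStr k
  | _, 0, _ => unit0
  | ag, (k+1), Γ =>
    {p : World × KStr k |
      ∃ Δ : CW, (if ag then RA Γ Δ else RB Γ Δ) ∧ p.1 = wval Δ ∧ p.2 = corr (!ag) k Δ}

/-!
Axioms 4 and 5 make each canonical accessibility relation transitive and euclidean, so a world
and any of its `K^c_i`-successors have the same `K^c_i`-successors. Hence `e_i^{[w],k}` does not
change when passing from `w` to a successor `w'`, and the clause for `L_i β` in the canonical model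
becomes the clause for `L_i β` in the correspondence model, evaluated at
`(e_a^{[w'],k}, e_b^{[w'],k-1}, [w'])` (for `i = a`). Induction on the formula then gives the
equivalence, as long as the evaluation never reaches a structure of depth `0`; the depth bounds
guarantee exactly that.
-/

def Formula.box : Bool → Formula → Formula
  | true => .La
  | false => .Lb

def boxRel (ag : Bool) (Γ Δ : Set Formula) : Prop :=
  ∀ α, Formula.box ag α ∈ Γ → α ∈ Δ

/-- `FitsDepth k j α`: evaluating `α` at a `(k, j)`-model never reaches a modality of an agent
whose structure has depth `0`, where `sat` answers `True` regardless of the formula. -/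
def FitsDepth : ℕ → ℕ → Formula → Prop
  | _, _, .atom _ => True
  | _, _, .fls => True
  | k, j, .neg α => FitsDepth k j α
  | k, j, .or α β => FitsDepth k j α ∧ FitsDepth k j β
  | 0, _, .La _ => False
  | k + 1, _, .La α => FitsDepth (k + 1) k α
  | 0, _, .Na _ => False
  | k + 1, _, .Na α => FitsDepth (k + 1) k α
  | _, 0, .Lb _ => False
  | _, j + 1, .Lb α => FitsDepth j (j + 1) α
  | _, 0, .Nb _ => False
  | _, j + 1, .Nb α => FitsDepth j (j + 1) α

lemma basic_box {ag : Bool} {α : Formula} : basic (Formula.box ag α) ↔ basic α := by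
  cases ag <;> rfl

lemma K45.box_four (ag : Bool) (α : Formula) :
    K45 ((Formula.box ag α).imp (Formula.box ag (Formula.box ag α))) := by
  cases ag
  exacts [K45.fourB α, K45.fourA α]

lemma K45.box_five (ag : Bool) (α : Formula) :
    K45 ((Formula.neg (Formula.box ag α)).imp
      (Formula.box ag (Formula.neg (Formula.box ag α)))) := by
  cases ag
  exacts [K45.fiveB α, K45.fiveA α]

namespace MCS

variable {Γ : Set Formula} {φ ψ : Formula}

lemma neg_not_mem (hΓ : MCS Γ) (hφ : φ ∈ Γ) : Formula.neg φ ∉ Γ := by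
  intro hnφ
  refine hΓ.2.1 [φ, Formula.neg φ] (by simp [hφ, hnφ]) (K45.taut ?_)
  intro v hneg hor hfls
  simp only [conjList, Formula.and, hneg, hor, hfls]
  cases v φ <;> rfl

lemma mem_of_K45_imp (hΓ : MCS Γ) (hφ : φ ∈ Γ) (himp : K45 (φ.imp ψ)) (hψ : basic ψ) :
    ψ ∈ Γ := by
  refine (hΓ.2.2 ψ hψ).resolve_right fun hnψ => ?_
  refine hΓ.2.1 [φ, Formula.neg ψ] (by simp [hφ, hnψ]) (K45.mp (K45.taut ?_) himp)
  intro v hneg hor hfls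
  simp only [conjList, Formula.and, Formula.imp, hneg, hor, hfls]
  cases v φ <;> cases v ψ <;> rfl

lemma box_mem_of_mem_boxRel {ag : Bool} {Δ : Set Formula} {α : Formula} (hΓ : MCS Γ)
    (hΔ : MCS Δ) (hΓΔ : boxRel ag Γ Δ) (hα : Formula.box ag α ∈ Δ) : Formula.box ag α ∈ Γ := by
  refine (hΓ.2.2 _ (hΔ.1 _ hα)).resolve_right fun hn => ?_
  -- axiom 5 puts `box ¬box α` into `Γ`, so `¬box α` would lie in `Δ` next to `box α`
  have h5 := hΓ.mem_of_K45_imp hn (K45.box_five ag α)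
    (basic_box.2 (by simpa only [basic] using hΔ.1 _ hα))
  exact hΔ.neg_not_mem hα (hΓΔ _ h5)

end MCS

lemma boxRel_trans {ag : Bool} {Γ Δ Θ : Set Formula} (hΓ : MCS Γ) (hΓΔ : boxRel ag Γ Δ)
    (hΔΘ : boxRel ag Δ Θ) : boxRel ag Γ Θ := fun α hα =>
  hΔΘ α (hΓΔ _ (hΓ.mem_of_K45_imp hα (K45.box_four ag α) (basic_box.2 (hΓ.1 _ hα))))

lemma boxRel_iff_of_boxRel {ag : Bool} {Γ Δ Θ : Set Formula} (hΓ : MCS Γ) (hΔ : MCS Δ)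
    (hΓΔ : boxRel ag Γ Δ) : boxRel ag Δ Θ ↔ boxRel ag Γ Θ :=
  ⟨boxRel_trans hΓ hΓΔ, fun hΓΘ α hα => hΓΘ α (hΓ.box_mem_of_mem_boxRel hΔ hΓΔ hα)⟩

lemma mem_corr_succ {ag : Bool} {m : ℕ} {Γ : CW} {p : World × KStr m} :
    p ∈ corr ag (m + 1) Γ ↔ ∃ Δ : CW, boxRel ag Γ.val Δ.val ∧ p = (wval Δ, corr (!ag) m Δ) := by
  cases ag <;>
  exact exists_congr fun Δ => and_congr_right' (Prod.ext_iff (y := (wval Δ, _))).symm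

lemma forall_mem_corr_succ {ag : Bool} {m : ℕ} {Γ : CW} {P : World × KStr m → Prop} :
    (∀ p ∈ corr ag (m + 1) Γ, P p) ↔
      ∀ Δ : CW, boxRel ag Γ.val Δ.val → P (wval Δ, corr (!ag) m Δ) := by
  refine ⟨fun h Δ hΓΔ => h _ (mem_corr_succ.2 ⟨Δ, hΓΔ, rfl⟩), fun h p hp => ?_⟩
  obtain ⟨Δ, hΓΔ, rfl⟩ := mem_corr_succ.1 hp
  exact h Δ hΓΔ

lemma corr_succ_eq_of_boxRel {ag : Bool} {m : ℕ} {Γ Δ : CW} (h : boxRel ag Γ.val Δ.val) :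
    corr ag (m + 1) Γ = corr ag (m + 1) Δ := by
  have key : ∀ p, p ∈ corr ag (m + 1) Γ ↔ p ∈ corr ag (m + 1) Δ := fun p => by
    simp only [mem_corr_succ, boxRel_iff_of_boxRel Γ.2 Δ.2 h]
  exact Set.ext key

lemma one_le_depthA_and_one_le_depthB (α : Formula) : 1 ≤ depthA α ∧ 1 ≤ depthB α := by
  induction α <;> simp only [depthA, depthB] at * <;> omega

lemma fitsDepth_succ_of_depth_le_succ (α : Formula) :
    (∀ m, depthA α ≤ m + 1 → FitsDepth (m + 1) m α) ∧
      (∀ m, depthB α ≤ m + 1 → FitsDepth m (m + 1) α) := by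
  induction α with
  | atom | fls => simp [FitsDepth]
  | neg α ih => simpa only [depthA, depthB, FitsDepth] using ih
  | or α β ihα ihβ =>
    simp only [depthA, depthB, FitsDepth, max_le_iff]
    exact ⟨fun m h => ⟨ihα.1 m h.1, ihβ.1 m h.2⟩, fun m h => ⟨ihα.2 m h.1, ihβ.2 m h.2⟩⟩
  | La α ih | Na α ih =>
    refine ⟨fun m h => ih.1 m h, fun m h => ?_⟩
    have h' : depthA α ≤ m := Nat.le_of_add_le_add_right h
    obtain ⟨m, rfl⟩ := Nat.exists_eq_add_one.2 ((one_le_depthA_and_one_le_depthB α).1.trans h')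
    exact ih.1 m h'
  | Lb α ih | Nb α ih =>
    refine ⟨fun m h => ?_, fun m h => ih.2 m h⟩
    have h' : depthB α ≤ m := Nat.le_of_add_le_add_right h
    obtain ⟨m, rfl⟩ := Nat.exists_eq_add_one.2 ((one_le_depthA_and_one_le_depthB α).2.trans h')
    exact ih.2 m h'

lemma fitsDepth_of_depth_le {α : Formula} {k j : ℕ} (hk : depthA α ≤ k) (hj : depthB α ≤ j) :
    FitsDepth k j α := by
  induction α generalizing k j with
  | atom | fls => simp [FitsDepth]
  | neg α ih => exact ih hk hj
  | or α β ihα ihβ =>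
    simp only [depthA, depthB, max_le_iff] at hk hj
    exact ⟨ihα hk.1 hj.1, ihβ hk.2 hj.2⟩
  | La α | Na α =>
    obtain ⟨k, rfl⟩ := Nat.exists_eq_add_one.2 ((one_le_depthA_and_one_le_depthB α).1.trans hk)
    exact (fitsDepth_succ_of_depth_le_succ α).1 k hk
  | Lb α | Nb α =>
    obtain ⟨j, rfl⟩ := Nat.exists_eq_add_one.2 ((one_le_depthA_and_one_le_depthB α).2.trans hj)
    exact (fitsDepth_succ_of_depth_le_succ α).2 j hj

theorem csat_iff_sat_corr {α : Formula} (hb : basic α) {k j : ℕ} (hfit : FitsDepth k j α)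
    (Γ : CW) : csat Γ α ↔ sat k j (corr true k Γ) (corr false j Γ) (wval Γ) α := by
  induction α generalizing k j Γ with
  | atom p => rfl
  | fls => rfl
  | neg α ih => exact not_congr (ih hb hfit Γ)
  | or α β ihα ihβ => exact or_congr (ihα hb.1 hfit.1 Γ) (ihβ hb.2 hfit.2 Γ)
  | La α ih =>
    cases k with
    | zero => exact hfit.elim
    | succ k =>
      simp only [csat, sat]
      rw [forall_mem_corr_succ]
      refine forall₂_congr fun Δ hΓΔ => ?_
      rw [corr_succ_eq_of_boxRel (ag := true) hΓΔ]
      exact ih hb hfit Δ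
  | Lb α ih =>
    cases j with
    | zero => exact hfit.elim
    | succ j =>
      simp only [csat, sat]
      rw [forall_mem_corr_succ]
      refine forall₂_congr fun Δ hΓΔ => ?_
      rw [corr_succ_eq_of_boxRel (ag := false) hΓΔ]
      exact ih hb hfit Δ
  | Na | Nb => exact hb.elim

/-- for basic formulas of a-depth ≤ k, b-depth ≤ j, truth at a
world of the K45_n canonical model coincides with truth at the corresponding
(k,j)-model. -/
theorem canonical_correspondence (α : Formula) (hb : basic α) (hm : ONLminus α)
    (k j : ℕ) (hk : depthA α ≤ k) (hj : depthB α ≤ j) (Γ : CW) :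
    csat Γ α ↔ sat k j (corr true k Γ) (corr false j Γ) (wval Γ) α :=
  csat_iff_sat_corr hb (fitsDepth_of_depth_le hk hj) Γ
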